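/- (Frequentist version of Corollary 1.) Let 0 < τ₁ < τ₂ and let A satisfy 1 + τ₁ < A < 1 + τ₂; set α = f_o(A,τ₁) and β = g_o(A,τ₂). Then α > 0, β > 0, and for all square-summable θ', θ'' : ℕ → ℝ and all integers n₁, n₂ ≥ 1: P_{θ'}({x : ∃ d ≥ d_{τ₁}(θ') + n₁ with crit_A(x,d) ≤ crit_A(x,d_{τ₁}(θ'))}) + P_{θ''}({x : ∃ d with 1 ≤ d ≤ d_{τ₂}(θ'') − n₂ and crit_A(x,d) ≤ crit_A(x,d_{τ₂}(θ''))}) ≤ e^{−αn₁}/(1−e^{−α}) + e^{−βn₂}/(1−e^{−β}). -/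

import Mathlib

open MeasureTheory ProbabilityTheory Real
open scoped ENNReal NNReal

noncomputable section

/-- Tail sum `∑_{i>d} θ_i²` (indices `i = 1,2,…`). -/
def tailSum (θ : ℕ → ℝ) (d : ℕ) : ℝ := ∑' i : ℕ, if d < i then θ i ^ 2 else 0

/-- The τ-quantization error `r_τ(d,θ) = ∑_{i>d} θ_i² + τ d ε²`. -/
def rErr (ε τ : ℝ) (θ : ℕ → ℝ) (d : ℕ) : ℝ := tailSum θ d + τ * d * ε ^ 2

/-- The local effective τ-dimension: the smallest `d ≥ 1` minimizing `r_τ(·,θ)` over `d ≥ 1`. -/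
def effDim (ε τ : ℝ) (θ : ℕ → ℝ) : ℕ :=
  sInf {d : ℕ | 1 ≤ d ∧ ∀ d' : ℕ, 1 ≤ d' → rErr ε τ θ d ≤ rErr ε τ θ d'}

/-- The penalized criterion `crit_A(x,d) = -∑_{i=1}^d x_i² + A ε² d`. -/
def critF (ε A : ℝ) (x : ℕ → ℝ) (d : ℕ) : ℝ :=
  -(∑ i ∈ Finset.Icc 1 d, x i ^ 2) + A * ε ^ 2 * d

/-- `f(h,a,t) = (1/2)(a h + log(1-h) - t h/(1-h))`. -/
def fFun (h a t : ℝ) : ℝ := (a * h + Real.log (1 - h) - t * h / (1 - h)) / 2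

/-- `g(h,a,t) = f(-h,a,t)`. -/
def gFun (h a t : ℝ) : ℝ := fFun (-h) a t

/-- `f_o(a,t) = sup_{h ∈ [0,1)} f(h,a,t)`. -/
def fSup (a t : ℝ) : ℝ := sSup ((fun h => fFun h a t) '' Set.Ico 0 1)

/-- `g_o(a,t) = sup_{h ∈ [0,1]} g(h,a,t)`. -/
def gSup (a t : ℝ) : ℝ := sSup ((fun h => gFun h a t) '' Set.Icc 0 1)

/-- `P` is the infinite product measure `⨂_{i≥1} N(θ_i, ε²)` on the sequence space `ℝ^ℕ`,
characterized by being a probability measure whose finite-dimensional projections onto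
the coordinates `1,…,n` are the corresponding finite products of Gaussians. -/
def IsGaussianProduct (ε : ℝ) (θ : ℕ → ℝ) (P : Measure (ℕ → ℝ)) : Prop :=
  IsProbabilityMeasure P ∧
  ∀ n : ℕ, P.map (fun x (i : Fin n) => x ((i : ℕ) + 1)) =
    Measure.pi fun i : Fin n => gaussianReal (θ ((i : ℕ) + 1)) ((ε ^ 2).toNNReal)

lemma log_ge_one_sub_inv {x : ℝ} (hx : 0 < x) : 1 - x⁻¹ ≤ Real.log x := by
  have h := Real.log_le_sub_one_of_pos (inv_pos.mpr hx)
  rw [Real.log_inv] at h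
  linarith

lemma fFun_bddAbove (a t : ℝ) (ht : 0 ≤ t) : BddAbove ((fun h => fFun h a t) '' Set.Ico 0 1) := by
  refine ⟨(|a| + 1) / 2, ?_⟩
  rintro y ⟨h, ⟨h0, h1⟩, rfl⟩
  have hl : Real.log (1 - h) ≤ 0 := Real.log_nonpos (by linarith) (by linarith)
  have hq : 0 ≤ t * h / (1 - h) := by
    apply div_nonneg (mul_nonneg ht h0); linarith
  have : a * h ≤ |a| + 1 := by
    calc a * h ≤ |a| * h := by nlinarith [le_abs_self a]
    _ ≤ |a| + 1 := by nlinarith [abs_nonneg a]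
  simp only [fFun]
  linarith

lemma gFun_bddAbove (a t : ℝ) (ha : 0 ≤ a) (ht : 0 ≤ t) :
    BddAbove ((fun h => gFun h a t) '' Set.Icc 0 1) := by
  refine ⟨(1 + t) / 2, ?_⟩
  rintro y ⟨h, ⟨h0, h1⟩, rfl⟩
  simp only [gFun, fFun]
  have e1 : (1 : ℝ) - -h = 1 + h := by ring
  rw [e1]
  have hl : Real.log (1 + h) ≤ h := by
    have := Real.log_le_sub_one_of_pos (show (0:ℝ) < 1 + h by linarith)
    linarith
  have hq' : t * -h / (1 + h) = -(t * h / (1 + h)) := by ring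
  have hq2 : t * h / (1 + h) ≤ t := by
    rw [div_le_iff₀ (by linarith : (0:ℝ) < 1 + h)]
    nlinarith
  linarith [hq', hq2, mul_nonneg ha h0, hl, h1]

lemma fSup_pos {A t : ℝ} (ht : 0 < t) (hA : 1 + t < A) : 0 < fSup A t := by
  have hA0 : 0 < A := by linarith
  set h₀ : ℝ := (1 - (1 + t) / A) / 2 with hh₀
  have hδ : (1 + t) / A < 1 := (div_lt_one hA0).mpr hA
  have hδ0 : 0 < (1 + t) / A := by positivity
  have h1 : 0 < h₀ := by simp only [hh₀]; linarith
  have h2 : h₀ < 1 := by simp only [hh₀]; linarith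
  have key : 1 + t < A * (1 - h₀) := by
    have : A * (1 - h₀) = (A + (1 + t)) / 2 := by
      simp only [hh₀]; field_simp; ring
    rw [this]; linarith
  have hu : (0:ℝ) < 1 - h₀ := by linarith
  have HL := log_ge_one_sub_inv hu
  have hpos : 0 < fFun h₀ A t := by
    have hnum : A * h₀ + (1 - (1 - h₀)⁻¹) - t * h₀ / (1 - h₀) =
        (A * h₀ * (1 - h₀) - h₀ - t * h₀) / (1 - h₀) := by
      field_simp; ring
    have hnum_pos : 0 < (A * h₀ * (1 - h₀) - h₀ - t * h₀) / (1 - h₀) := by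
      apply div_pos _ hu
      have : A * h₀ * (1 - h₀) - h₀ - t * h₀ = h₀ * (A * (1 - h₀) - 1 - t) := by ring
      rw [this]; exact mul_pos h1 (by linarith)
    have : 0 < A * h₀ + (1 - (1 - h₀)⁻¹) - t * h₀ / (1 - h₀) := hnum ▸ hnum_pos
    simp only [fFun]
    linarith
  calc (0:ℝ) < fFun h₀ A t := hpos
    _ ≤ fSup A t := le_csSup (fFun_bddAbove A t ht.le) ⟨h₀, ⟨h1.le, h2⟩, rfl⟩

lemma gSup_pos {A t : ℝ} (ht : 0 < t) (hA0 : 0 < A) (hA : A < 1 + t) : 0 < gSup A t := by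
  obtain ⟨δ, hδdef⟩ : ∃ δ : ℝ, δ = (1 + t) / A - 1 := ⟨_, rfl⟩
  have hδ : 0 < δ := by
    have : 1 < (1 + t) / A := (one_lt_div hA0).mpr hA
    rw [hδdef]; linarith
  obtain ⟨h₀, hh₀⟩ : ∃ h₀ : ℝ, h₀ = min (δ / 2) 1 := ⟨_, rfl⟩
  have h1 : 0 < h₀ := hh₀ ▸ lt_min (by linarith) one_pos
  have h2 : h₀ ≤ 1 := hh₀ ▸ min_le_right _ _
  have hlt : h₀ < δ := lt_of_lt_of_le (by rw [hh₀]; exact lt_of_le_of_lt (min_le_left _ _) (by linarith)) le_rfl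
  have key : A * (1 + h₀) < 1 + t := by
    have hAδ : A * (1 + δ) = 1 + t := by rw [hδdef]; field_simp; ring
    nlinarith [mul_pos hA0 (sub_pos.mpr hlt)]
  have hu : (0:ℝ) < 1 + h₀ := by linarith
  have HL := log_ge_one_sub_inv hu
  have hpos : 0 < gFun h₀ A t := by
    simp only [gFun, fFun]
    have e1 : (1 : ℝ) - -h₀ = 1 + h₀ := by ring
    rw [e1]
    have hnum : A * -h₀ + (1 - (1 + h₀)⁻¹) - t * -h₀ / (1 + h₀) =
        (-(A * h₀) * (1 + h₀) + h₀ + t * h₀) / (1 + h₀) := by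
      field_simp
      ring
    have hnum_pos : 0 < (-(A * h₀) * (1 + h₀) + h₀ + t * h₀) / (1 + h₀) := by
      apply div_pos _ hu
      have : -(A * h₀) * (1 + h₀) + h₀ + t * h₀ = h₀ * (1 + t - A * (1 + h₀)) := by ring
      rw [this]; exact mul_pos h1 (by linarith)
    have : 0 < A * -h₀ + (1 - (1 + h₀)⁻¹) - t * -h₀ / (1 + h₀) := hnum ▸ hnum_pos
    linarith
  calc (0:ℝ) < gFun h₀ A t := hpos
    _ ≤ gSup A t := le_csSup (gFun_bddAbove A t hA0.le ht.le) ⟨h₀, ⟨h1.le, h2⟩, rfl⟩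

lemma sum_Ioc_eq (u : ℕ → ℝ) (a n : ℕ) :
    ∑ j ∈ Finset.Ioc a n, u j =
      ∑ i ∈ Finset.univ.filter (fun i : Fin n => a ≤ (i : ℕ)), u ((i : ℕ) + 1) := by
  have hinj : ∀ x ∈ Finset.univ.filter (fun i : Fin n => a ≤ (i : ℕ)),
      ∀ y ∈ Finset.univ.filter (fun i : Fin n => a ≤ (i : ℕ)),
      (x : ℕ) + 1 = (y : ℕ) + 1 → x = y := fun x _ y _ h => Fin.ext (by omega)
  have himg : Finset.image (fun i : Fin n => (i : ℕ) + 1)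
      (Finset.univ.filter (fun i : Fin n => a ≤ (i : ℕ))) = Finset.Ioc a n := by
    ext j
    simp only [Finset.mem_Ioc, Finset.mem_image, Finset.mem_filter, Finset.mem_univ, true_and]
    constructor
    · rintro ⟨i, hi, rfl⟩
      exact ⟨by omega, by omega⟩
    · rintro ⟨hj1, hj2⟩
      refine ⟨⟨j - 1, by omega⟩, by simp; omega, by simp; omega⟩
  have := Finset.sum_image (f := u) (g := fun i : Fin n => (i : ℕ) + 1) hinj
  rw [himg] at this
  exact this

lemma tailSum_nonneg (θ : ℕ → ℝ) (d : ℕ) : 0 ≤ tailSum θ d :=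
  tsum_nonneg (fun i => by positivity)

lemma tail_summable {θ : ℕ → ℝ} (hθ : Summable (fun i => θ i ^ 2)) (c : ℕ) :
    Summable (fun i => if c < i then θ i ^ 2 else 0) := by
  apply Summable.of_nonneg_of_le (fun i => by positivity) (fun i => ?_) hθ
  split
  · exact le_rfl
  · positivity

lemma tailSum_diff (θ : ℕ → ℝ) (hθ : Summable (fun i => θ i ^ 2)) {a b : ℕ} (hab : a ≤ b) :
    tailSum θ a = (∑ j ∈ Finset.Ioc a b, θ j ^ 2) + tailSum θ b := by
  have hfe : (fun i => if a < i then θ i ^ 2 else 0) =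
      (fun i => (if i ∈ Finset.Ioc a b then θ i ^ 2 else 0) + (if b < i then θ i ^ 2 else 0)) := by
    funext i
    simp only [Finset.mem_Ioc]
    split_ifs <;> first | omega | ring
  have hs1 : Summable (fun i => if i ∈ Finset.Ioc a b then θ i ^ 2 else 0) :=
    summable_of_ne_finset_zero (s := Finset.Ioc a b) (fun i hi => if_neg hi)
  rw [tailSum, hfe, Summable.tsum_add hs1 (tail_summable hθ b)]
  congr 1
  rw [tsum_eq_sum (s := Finset.Ioc a b) (fun i hi => if_neg hi)]
  exact Finset.sum_congr rfl (fun i hi => if_pos hi)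

lemma effDim_spec (ε τ : ℝ) (hε : 0 < ε) (hτ : 0 < τ) (θ : ℕ → ℝ)
    (hθ : Summable (fun i => θ i ^ 2)) :
    1 ≤ effDim ε τ θ ∧ ∀ d' : ℕ, 1 ≤ d' → rErr ε τ θ (effDim ε τ θ) ≤ rErr ε τ θ d' := by
  have hne : {d : ℕ | 1 ≤ d ∧ ∀ d' : ℕ, 1 ≤ d' → rErr ε τ θ d ≤ rErr ε τ θ d'}.Nonempty := by
    obtain ⟨N, hN⟩ := exists_nat_gt (rErr ε τ θ 1 / (τ * ε ^ 2))
    have hτε : 0 < τ * ε ^ 2 := by positivity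
    have hNbig : rErr ε τ θ 1 < τ * N * ε ^ 2 := by
      rw [div_lt_iff₀ hτε] at hN
      calc rErr ε τ θ 1 < N * (τ * ε ^ 2) := hN
        _ = τ * N * ε ^ 2 := by ring
    have hr1 : 0 < rErr ε τ θ 1 := by
      have := tailSum_nonneg θ 1
      simp only [rErr]
      push_cast
      nlinarith
    have hN1 : 1 ≤ N := by
      by_contra hc
      push_neg at hc
      interval_cases N
      · simp at hNbig; nlinarith
    obtain ⟨d₀, hd₀mem, hd₀min⟩ := Finset.exists_min_image (Finset.Icc 1 N)
      (fun d => rErr ε τ θ d) ⟨1, Finset.mem_Icc.mpr ⟨le_rfl, hN1⟩⟩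
    rw [Finset.mem_Icc] at hd₀mem
    refine ⟨d₀, hd₀mem.1, fun d' hd' => ?_⟩
    by_cases hle : d' ≤ N
    · exact hd₀min d' (Finset.mem_Icc.mpr ⟨hd', hle⟩)
    · push_neg at hle
      have : rErr ε τ θ 1 < rErr ε τ θ d' := by
        have h1 : τ * N * ε ^ 2 ≤ τ * d' * ε ^ 2 := by
          have : (N : ℝ) ≤ d' := by exact_mod_cast hle.le
          nlinarith
        have h2 : 0 ≤ tailSum θ d' := tailSum_nonneg θ d'
        simp only [rErr] at *
        nlinarith
      have h3 := hd₀min 1 (Finset.mem_Icc.mpr ⟨le_rfl, hN1⟩)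
      linarith
  have := Nat.sInf_mem hne
  exact this

lemma crit_iff (ε A : ℝ) (x : ℕ → ℝ) {a b : ℕ} (hab : a ≤ b) :
    (critF ε A x b ≤ critF ε A x a ↔
      A * ε ^ 2 * ((b : ℝ) - (a : ℝ)) ≤ ∑ j ∈ Finset.Ioc a b, x j ^ 2) := by
  have h1 : Finset.Icc 1 b = Finset.Ioc 0 b := rfl
  have h2 : Finset.Icc 1 a = Finset.Ioc 0 a := rfl
  have hsplit := Finset.sum_Ioc_consecutive (fun i => x i ^ 2) (Nat.zero_le a) hab
  simp only [critF, h1, h2]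
  constructor <;> intro hle <;> linarith [hsplit]

lemma gaussian_pdf_mul (σ μ h : ℝ) (hσ : 0 < σ) (hh : h < 1) (x : ℝ) :
    gaussianPDFReal μ ((σ ^ 2).toNNReal) x * Real.exp (h * x ^ 2 / (2 * σ ^ 2)) =
      (Real.exp (h * μ ^ 2 / (2 * σ ^ 2 * (1 - h))) * (Real.sqrt (2 * π * σ ^ 2))⁻¹) *
        Real.exp (-((1 - h) / (2 * σ ^ 2)) * (x - μ / (1 - h)) ^ 2) := by
  have hv : ((σ ^ 2).toNNReal : ℝ) = σ ^ 2 := Real.coe_toNNReal _ (sq_nonneg σ)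
  have hσ2 : (σ:ℝ) ^ 2 ≠ 0 := by positivity
  have h1 : (1:ℝ) - h ≠ 0 := by linarith
  have key : -(x - μ) ^ 2 / (2 * σ ^ 2) + h * x ^ 2 / (2 * σ ^ 2) =
      h * μ ^ 2 / (2 * σ ^ 2 * (1 - h)) + -((1 - h) / (2 * σ ^ 2)) * (x - μ / (1 - h)) ^ 2 := by
    field_simp
    ring
  calc gaussianPDFReal μ ((σ ^ 2).toNNReal) x * Real.exp (h * x ^ 2 / (2 * σ ^ 2))
      = (Real.sqrt (2 * π * σ ^ 2))⁻¹ *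
        (Real.exp (-(x - μ) ^ 2 / (2 * σ ^ 2)) * Real.exp (h * x ^ 2 / (2 * σ ^ 2))) := by
        rw [gaussianPDFReal, hv]; ring
    _ = (Real.sqrt (2 * π * σ ^ 2))⁻¹ *
        Real.exp (-(x - μ) ^ 2 / (2 * σ ^ 2) + h * x ^ 2 / (2 * σ ^ 2)) := by
        rw [Real.exp_add]
    _ = (Real.sqrt (2 * π * σ ^ 2))⁻¹ *
        (Real.exp (h * μ ^ 2 / (2 * σ ^ 2 * (1 - h))) *
          Real.exp (-((1 - h) / (2 * σ ^ 2)) * (x - μ / (1 - h)) ^ 2)) := by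
        rw [← Real.exp_add, key]
    _ = (Real.exp (h * μ ^ 2 / (2 * σ ^ 2 * (1 - h))) * (Real.sqrt (2 * π * σ ^ 2))⁻¹) *
        Real.exp (-((1 - h) / (2 * σ ^ 2)) * (x - μ / (1 - h)) ^ 2) := by ring

lemma gaussian_mgf (σ μ h : ℝ) (hσ : 0 < σ) (hh : h < 1) :
    Integrable (fun x => Real.exp (h * x ^ 2 / (2 * σ ^ 2))) (gaussianReal μ ((σ ^ 2).toNNReal)) ∧
    ∫ x, Real.exp (h * x ^ 2 / (2 * σ ^ 2)) ∂(gaussianReal μ ((σ ^ 2).toNNReal)) =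
      Real.exp (h * μ ^ 2 / (2 * σ ^ 2 * (1 - h))) / Real.sqrt (1 - h) := by
  have hvne : ((σ ^ 2).toNNReal) ≠ 0 := by
    simp only [ne_eq, Real.toNNReal_eq_zero, not_le]
    positivity
  have h1h : (0:ℝ) < 1 - h := by linarith
  set a : ℝ := (1 - h) / (2 * σ ^ 2) with ha_def
  have ha : 0 < a := by positivity
  set c : ℝ := μ / (1 - h) with hc_def
  set C : ℝ := Real.exp (h * μ ^ 2 / (2 * σ ^ 2 * (1 - h))) * (Real.sqrt (2 * π * σ ^ 2))⁻¹
    with hC_def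
  -- the density-weighted function
  have hpdf : ∀ x, gaussianPDFReal μ ((σ ^ 2).toNNReal) x * Real.exp (h * x ^ 2 / (2 * σ ^ 2)) =
      C * Real.exp (-a * (x - c) ^ 2) := gaussian_pdf_mul σ μ h hσ hh
  have hint_vol : Integrable (fun x => C * Real.exp (-a * (x - c) ^ 2)) volume :=
    ((integrable_exp_neg_mul_sq ha).comp_sub_right c).const_mul C
  have hmeas : Measurable fun x : ℝ => (gaussianPDFReal μ ((σ ^ 2).toNNReal) x).toNNReal :=
    (measurable_gaussianPDFReal _ _).real_toNNReal
  have hdens : gaussianReal μ ((σ ^ 2).toNNReal) =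
      volume.withDensity (fun x => ((gaussianPDFReal μ ((σ ^ 2).toNNReal) x).toNNReal : ℝ≥0∞)) := by
    rw [gaussianReal_of_var_ne_zero _ hvne]
    congr 1
  have hsmul : ∀ x : ℝ, (gaussianPDFReal μ ((σ ^ 2).toNNReal) x).toNNReal •
      Real.exp (h * x ^ 2 / (2 * σ ^ 2)) = C * Real.exp (-a * (x - c) ^ 2) := by
    intro x
    rw [NNReal.smul_def, smul_eq_mul, Real.coe_toNNReal _ (gaussianPDFReal_nonneg _ _ _)]
    exact hpdf x
  constructor
  · rw [hdens, integrable_withDensity_iff_integrable_smul hmeas]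
    exact hint_vol.congr (Filter.Eventually.of_forall fun x => (hsmul x).symm)
  · rw [hdens, integral_withDensity_eq_integral_smul hmeas]
    rw [integral_congr_ae (Filter.Eventually.of_forall hsmul), integral_const_mul,
      integral_sub_right_eq_self (fun x => Real.exp (-a * x ^ 2)) c, integral_gaussian]
    have hπ : (0:ℝ) < π := Real.pi_pos
    have hsq : Real.sqrt (π / a) = Real.sqrt (2 * π * σ ^ 2) * (Real.sqrt (1 - h))⁻¹ := by
      rw [← Real.sqrt_inv, ← Real.sqrt_mul (by positivity : (0:ℝ) ≤ 2 * π * σ ^ 2)]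
      congr 1
      rw [ha_def]
      field_simp
    have h2 : Real.sqrt (2 * π * σ ^ 2) ≠ 0 := by positivity
    have h3 : Real.sqrt (1 - h) ≠ 0 := by
      rw [Real.sqrt_ne_zero']; exact h1h
    rw [hsq, hC_def]
    field_simp

lemma pi_integral_prod {n : ℕ} {E : Fin n → Type*} [∀ i, MeasurableSpace (E i)]
    (κ : ∀ i, Measure (E i)) [∀ i, SigmaFinite (κ i)] (f : ∀ i, E i → ℝ)
    (hf : ∀ i, Integrable (f i) (κ i)) :
    Integrable (fun y : ∀ i, E i => ∏ i, f i (y i)) (Measure.pi κ) ∧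
    ∫ y : ∀ i, E i, ∏ i, f i (y i) ∂(Measure.pi κ) = ∏ i, ∫ x, f i x ∂(κ i) := by
  letI : ∀ i, MeasureSpace (E i) := fun i => ⟨κ i⟩
  haveI : ∀ i : Fin n, SigmaFinite (volume : Measure (E i)) := fun i =>
    inferInstanceAs (SigmaFinite (κ i))
  constructor
  · exact Integrable.fintype_prod_dep hf
  · exact integral_fintype_prod_eq_prod f

lemma chernoff (ε : ℝ) (hε : 0 < ε) (n : ℕ) (θ : ℕ → ℝ) (I : Finset (Fin n)) (h c : ℝ)
    (hh : h < 1) :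
    (Measure.pi fun i : Fin n => gaussianReal (θ ((i : ℕ) + 1)) ((ε ^ 2).toNNReal))
      {y | h * c ≤ h * ∑ i ∈ I, (y i) ^ 2}
    ≤ ENNReal.ofReal (Real.exp (-(h * c) / (2 * ε ^ 2)) *
        ∏ i ∈ I, (Real.exp (h * θ ((i : ℕ) + 1) ^ 2 / (2 * ε ^ 2 * (1 - h))) /
          Real.sqrt (1 - h))) := by
  set κ : Fin n → Measure ℝ := fun i => gaussianReal (θ ((i : ℕ) + 1)) ((ε ^ 2).toNNReal)
    with hκ
  haveI : ∀ i, IsProbabilityMeasure (κ i) := fun i => by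
    rw [hκ]; infer_instance
  set hi : Fin n → ℝ := fun i => if i ∈ I then h else 0 with hhi
  set f : Fin n → ℝ → ℝ := fun i x => Real.exp (hi i * x ^ 2 / (2 * ε ^ 2)) with hf_def
  have hilt : ∀ i, hi i < 1 := by
    intro i
    show (if i ∈ I then h else 0) < 1
    split_ifs
    · exact hh
    · exact one_pos
  have hmgf : ∀ i, Integrable (f i) (κ i) ∧
      ∫ x, f i x ∂(κ i) =
        Real.exp (hi i * θ ((i : ℕ) + 1) ^ 2 / (2 * ε ^ 2 * (1 - hi i))) /
          Real.sqrt (1 - hi i) := by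
    intro i
    exact gaussian_mgf ε (θ ((i : ℕ) + 1)) (hi i) hε (hilt i)
  obtain ⟨hGint, hGeq⟩ := pi_integral_prod κ f (fun i => (hmgf i).1)
  -- pointwise identity
  have hGy : ∀ y : Fin n → ℝ, Real.exp (-(h * c) / (2 * ε ^ 2)) * ∏ i, f i (y i) =
      Real.exp ((h * ∑ i ∈ I, (y i) ^ 2 - h * c) / (2 * ε ^ 2)) := by
    intro y
    have e1 : ∀ i : Fin n, f i (y i) =
        Real.exp (if i ∈ I then h * (y i) ^ 2 / (2 * ε ^ 2) else 0) := by
      intro i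
      show Real.exp ((if i ∈ I then h else 0) * (y i) ^ 2 / (2 * ε ^ 2)) = _
      split_ifs
      · rfl
      · simp
    simp_rw [e1]
    rw [← Real.exp_sum, Finset.sum_ite_mem, Finset.univ_inter, ← Real.exp_add]
    congr 1
    rw [← Finset.sum_div, ← Finset.mul_sum]
    ring
  -- measurability of the event
  have hS : MeasurableSet {y : Fin n → ℝ | h * c ≤ h * ∑ i ∈ I, (y i) ^ 2} := by
    apply measurableSet_le measurable_const
    exact (Finset.measurable_sum I (fun i _ => (measurable_pi_apply i).pow_const 2)).const_mul h
  -- Markov step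
  have step1 : (Measure.pi κ) {y | h * c ≤ h * ∑ i ∈ I, (y i) ^ 2} ≤
      ∫⁻ y, ENNReal.ofReal (Real.exp (-(h * c) / (2 * ε ^ 2)) * ∏ i, f i (y i))
        ∂(Measure.pi κ) := by
    rw [← lintegral_indicator_one hS]
    refine lintegral_mono (fun y => ?_)
    dsimp only
    by_cases hy : y ∈ {y : Fin n → ℝ | h * c ≤ h * ∑ i ∈ I, (y i) ^ 2}
    · rw [Set.indicator_of_mem hy]
      simp only [Pi.one_apply]
      rw [show (1 : ℝ≥0∞) = ENNReal.ofReal 1 by simp]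
      apply ENNReal.ofReal_le_ofReal
      rw [hGy y, ← Real.exp_zero]
      apply Real.exp_le_exp.mpr
      apply div_nonneg _ (by positivity)
      have : h * c ≤ h * ∑ i ∈ I, (y i) ^ 2 := hy
      linarith
    · rw [Set.indicator_of_notMem hy]
      exact zero_le
  -- convert to integral
  have step2 : ∫⁻ y, ENNReal.ofReal (Real.exp (-(h * c) / (2 * ε ^ 2)) * ∏ i, f i (y i))
      ∂(Measure.pi κ) =
      ENNReal.ofReal (Real.exp (-(h * c) / (2 * ε ^ 2)) *
        ∫ y, ∏ i, f i (y i) ∂(Measure.pi κ)) := by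
    rw [← integral_const_mul]
    exact (ofReal_integral_eq_lintegral_ofReal (hGint.const_mul _)
      (Filter.Eventually.of_forall (fun y => by
        apply mul_nonneg (Real.exp_nonneg _)
        exact Finset.prod_nonneg (fun i _ => Real.exp_nonneg _)))).symm
  -- compute product
  have step3 : ∫ y, ∏ i, f i (y i) ∂(Measure.pi κ) =
      ∏ i ∈ I, (Real.exp (h * θ ((i : ℕ) + 1) ^ 2 / (2 * ε ^ 2 * (1 - h))) /
        Real.sqrt (1 - h)) := by
    rw [hGeq]
    rw [← Finset.prod_subset (Finset.subset_univ I) (fun i _ hiI => ?_)]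
    · apply Finset.prod_congr rfl
      intro i hiI
      rw [(hmgf i).2]
      simp only [hhi, if_pos hiI]
    · rw [(hmgf i).2]
      simp only [hhi, if_neg hiI]
      simp
  calc (Measure.pi κ) {y | h * c ≤ h * ∑ i ∈ I, (y i) ^ 2} ≤ _ := step1
    _ = _ := step2
    _ = _ := by rw [step3]

lemma crit_iff' (ε A : ℝ) (x : ℕ → ℝ) {a b : ℕ} (hab : a ≤ b) :
    (critF ε A x a ≤ critF ε A x b ↔
      ∑ j ∈ Finset.Ioc a b, x j ^ 2 ≤ A * ε ^ 2 * ((b : ℝ) - (a : ℝ))) := by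
  have h1 : Finset.Icc 1 b = Finset.Ioc 0 b := rfl
  have h2 : Finset.Icc 1 a = Finset.Ioc 0 a := rfl
  have hsplit := Finset.sum_Ioc_consecutive (fun i => x i ^ 2) (Nat.zero_le a) hab
  simp only [critF, h1, h2]
  constructor <;> intro hle <;> linarith [hsplit]

lemma proj_measure (ε : ℝ) (θ : ℕ → ℝ) (P : Measure (ℕ → ℝ)) (hP : IsGaussianProduct ε θ P)
    (n : ℕ) (S : Set (Fin n → ℝ)) (hS : MeasurableSet S) :
    P ((fun x (i : Fin n) => x ((i : ℕ) + 1)) ⁻¹' S) =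
      (Measure.pi fun i : Fin n => gaussianReal (θ ((i : ℕ) + 1)) ((ε ^ 2).toNNReal)) S := by
  rw [← hP.2 n, Measure.map_apply (measurable_pi_lambda _ (fun i => measurable_pi_apply _)) hS]

lemma sqrt_eq_exp_half_log {u : ℝ} (hu : 0 < u) :
    Real.sqrt u = Real.exp (Real.log u / 2) := by
  rw [Real.sqrt_eq_rpow, Real.rpow_def_of_pos hu]
  congr 1
  ring

lemma overshoot (ε τ A : ℝ) (hε : 0 < ε) (θ : ℕ → ℝ) (P : Measure (ℕ → ℝ))
    (hP : IsGaussianProduct ε θ P) (dstar k : ℕ)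
    (htail : ∑ j ∈ Finset.Ioc dstar (dstar + k), θ j ^ 2 ≤ τ * k * ε ^ 2)
    (h : ℝ) (hh0 : 0 < h) (hh1 : h < 1) :
    P {x | critF ε A x (dstar + k) ≤ critF ε A x dstar} ≤
      ENNReal.ofReal (Real.exp (-(k : ℝ) * fFun h A τ)) := by
  have h1h : (0:ℝ) < 1 - h := by linarith
  set If : Finset (Fin (dstar + k)) :=
    Finset.univ.filter (fun i : Fin (dstar + k) => dstar ≤ (i : ℕ)) with hIf
  have hcast : A * ε ^ 2 * (((dstar + k : ℕ) : ℝ) - (dstar : ℝ)) = A * ε ^ 2 * k := by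
    push_cast; ring
  have hScard : If.card = k := by
    have h1 : ((Finset.Ioc dstar (dstar + k)).card : ℝ) = (If.card : ℝ) := by
      simpa using sum_Ioc_eq (fun _ => (1:ℝ)) dstar (dstar + k)
    have h2 : (Finset.Ioc dstar (dstar + k)).card = If.card := Nat.cast_inj.mp h1
    rw [Nat.card_Ioc] at h2
    omega
  have hSmeas : MeasurableSet {y : Fin (dstar + k) → ℝ |
      h * (A * ε ^ 2 * k) ≤ h * ∑ i ∈ If, (y i) ^ 2} := by
    apply measurableSet_le measurable_const
    exact (Finset.measurable_sum If (fun i _ => (measurable_pi_apply i).pow_const 2)).const_mul h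
  have hevent : {x : ℕ → ℝ | critF ε A x (dstar + k) ≤ critF ε A x dstar} =
      (fun x (i : Fin (dstar + k)) => x ((i : ℕ) + 1)) ⁻¹'
        {y : Fin (dstar + k) → ℝ | h * (A * ε ^ 2 * k) ≤ h * ∑ i ∈ If, (y i) ^ 2} := by
    ext x
    simp only [Set.mem_setOf_eq, Set.mem_preimage]
    rw [crit_iff ε A x (Nat.le_add_right dstar k), hcast,
      sum_Ioc_eq (fun j => x j ^ 2) dstar (dstar + k)]
    exact (mul_le_mul_iff_right₀ hh0).symm
  have hchern := chernoff ε hε (dstar + k) θ If h (A * ε ^ 2 * k) hh1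
  have hbound : Real.exp (-(h * (A * ε ^ 2 * k)) / (2 * ε ^ 2)) *
      ∏ i ∈ If, (Real.exp (h * θ ((i : ℕ) + 1) ^ 2 / (2 * ε ^ 2 * (1 - h))) /
        Real.sqrt (1 - h)) ≤ Real.exp (-(k : ℝ) * fFun h A τ) := by
    rw [Finset.prod_div_distrib, Finset.prod_const, hScard, ← Real.exp_sum,
      ← Finset.sum_div, ← Finset.mul_sum, sqrt_eq_exp_half_log h1h, ← Real.exp_nat_mul,
      ← Real.exp_sub, ← Real.exp_add]
    apply Real.exp_le_exp.mpr
    have hT : ∑ i ∈ If, θ ((i : ℕ) + 1) ^ 2 ≤ τ * k * ε ^ 2 := by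
      rw [← sum_Ioc_eq (fun j => θ j ^ 2) dstar (dstar + k)]
      exact htail
    have hmono : (h * ∑ i ∈ If, θ ((i : ℕ) + 1) ^ 2) / (2 * ε ^ 2 * (1 - h)) ≤
        (h * (τ * k * ε ^ 2)) / (2 * ε ^ 2 * (1 - h)) := by
      exact (div_le_div_iff_of_pos_right (by positivity)).mpr (mul_le_mul_of_nonneg_left hT hh0.le)
    have hexp_eq : -(h * (A * ε ^ 2 * k)) / (2 * ε ^ 2) +
        (h * (τ * k * ε ^ 2) / (2 * ε ^ 2 * (1 - h)) - (k : ℝ) * (Real.log (1 - h) / 2)) =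
        -(k : ℝ) * fFun h A τ := by
      rw [fFun]
      have hε2 : (ε:ℝ) ^ 2 ≠ 0 := by positivity
      have h1h' : (1:ℝ) - h ≠ 0 := ne_of_gt h1h
      field_simp
      ring
    linarith
  calc P {x | critF ε A x (dstar + k) ≤ critF ε A x dstar}
      = _ := by rw [hevent]; exact proj_measure ε θ P hP _ _ hSmeas
    _ ≤ _ := hchern
    _ ≤ ENNReal.ofReal (Real.exp (-(k : ℝ) * fFun h A τ)) := ENNReal.ofReal_le_ofReal hbound

lemma undershoot (ε τ A : ℝ) (hε : 0 < ε) (θ : ℕ → ℝ) (P : Measure (ℕ → ℝ))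
    (hP : IsGaussianProduct ε θ P) (d k : ℕ)
    (htail : τ * k * ε ^ 2 ≤ ∑ j ∈ Finset.Ioc d (d + k), θ j ^ 2)
    (h : ℝ) (hh0 : 0 < h) (hh1 : h ≤ 1) :
    P {x | critF ε A x d ≤ critF ε A x (d + k)} ≤
      ENNReal.ofReal (Real.exp (-(k : ℝ) * gFun h A τ)) := by
  have h1h : (0:ℝ) < 1 + h := by linarith
  have hh1' : -h < 1 := by linarith
  set If : Finset (Fin (d + k)) :=
    Finset.univ.filter (fun i : Fin (d + k) => d ≤ (i : ℕ)) with hIf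
  have hcast : A * ε ^ 2 * (((d + k : ℕ) : ℝ) - (d : ℝ)) = A * ε ^ 2 * k := by
    push_cast; ring
  have hScard : If.card = k := by
    have h1 : ((Finset.Ioc d (d + k)).card : ℝ) = (If.card : ℝ) := by
      simpa using sum_Ioc_eq (fun _ => (1:ℝ)) d (d + k)
    have h2 : (Finset.Ioc d (d + k)).card = If.card := Nat.cast_inj.mp h1
    rw [Nat.card_Ioc] at h2
    omega
  have hSmeas : MeasurableSet {y : Fin (d + k) → ℝ |
      -h * (A * ε ^ 2 * k) ≤ -h * ∑ i ∈ If, (y i) ^ 2} := by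
    apply measurableSet_le measurable_const
    exact (Finset.measurable_sum If (fun i _ => (measurable_pi_apply i).pow_const 2)).const_mul _
  have hevent : {x : ℕ → ℝ | critF ε A x d ≤ critF ε A x (d + k)} =
      (fun x (i : Fin (d + k)) => x ((i : ℕ) + 1)) ⁻¹'
        {y : Fin (d + k) → ℝ | -h * (A * ε ^ 2 * k) ≤ -h * ∑ i ∈ If, (y i) ^ 2} := by
    ext x
    simp only [Set.mem_setOf_eq, Set.mem_preimage]
    rw [crit_iff' ε A x (Nat.le_add_right d k), hcast,
      sum_Ioc_eq (fun j => x j ^ 2) d (d + k)]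
    exact (mul_le_mul_left_of_neg (neg_lt_zero.mpr hh0)).symm
  have hchern := chernoff ε hε (d + k) θ If (-h) (A * ε ^ 2 * k) hh1'
  have e1 : (1:ℝ) - -h = 1 + h := by ring
  rw [e1] at hchern
  have hbound : Real.exp (-(-h * (A * ε ^ 2 * k)) / (2 * ε ^ 2)) *
      ∏ i ∈ If, (Real.exp (-h * θ ((i : ℕ) + 1) ^ 2 / (2 * ε ^ 2 * (1 + h))) /
        Real.sqrt (1 + h)) ≤ Real.exp (-(k : ℝ) * gFun h A τ) := by
    rw [Finset.prod_div_distrib, Finset.prod_const, hScard, ← Real.exp_sum,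
      ← Finset.sum_div, ← Finset.mul_sum, sqrt_eq_exp_half_log h1h, ← Real.exp_nat_mul,
      ← Real.exp_sub, ← Real.exp_add]
    apply Real.exp_le_exp.mpr
    have hT : τ * k * ε ^ 2 ≤ ∑ i ∈ If, θ ((i : ℕ) + 1) ^ 2 := by
      rw [← sum_Ioc_eq (fun j => θ j ^ 2) d (d + k)]
      exact htail
    have hmono : (-h * ∑ i ∈ If, θ ((i : ℕ) + 1) ^ 2) / (2 * ε ^ 2 * (1 + h)) ≤
        (-h * (τ * k * ε ^ 2)) / (2 * ε ^ 2 * (1 + h)) := by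
      apply (div_le_div_iff_of_pos_right (by positivity)).mpr
      exact mul_le_mul_of_nonpos_left hT (by linarith)
    have hexp_eq : -(-h * (A * ε ^ 2 * k)) / (2 * ε ^ 2) +
        (-h * (τ * k * ε ^ 2) / (2 * ε ^ 2 * (1 + h)) - (k : ℝ) * (Real.log (1 + h) / 2)) =
        -(k : ℝ) * gFun h A τ := by
      rw [gFun, fFun, e1]
      have hε2 : (ε:ℝ) ^ 2 ≠ 0 := by positivity
      have h1h' : (1:ℝ) + h ≠ 0 := ne_of_gt h1h
      field_simp
      ring
    linarith
  calc P {x | critF ε A x d ≤ critF ε A x (d + k)}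
      = _ := by rw [hevent]; exact proj_measure ε θ P hP _ _ hSmeas
    _ ≤ _ := hchern
    _ ≤ ENNReal.ofReal (Real.exp (-(k : ℝ) * gFun h A τ)) := ENNReal.ofReal_le_ofReal hbound

lemma geom_bound (a : ℝ) (ha : 0 < a) (n : ℕ) :
    ∑' k : ℕ, ENNReal.ofReal (Real.exp (-a * ((n : ℝ) + k))) =
      ENNReal.ofReal (Real.exp (-a * n) / (1 - Real.exp (-a))) := by
  have hr0 : (0:ℝ) ≤ Real.exp (-a) := Real.exp_nonneg _
  have hr1 : Real.exp (-a) < 1 := Real.exp_lt_one_iff.mpr (by linarith)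
  have hpt : ∀ k : ℕ, Real.exp (-a * ((n : ℝ) + k)) = Real.exp (-a * n) * (Real.exp (-a)) ^ k := by
    intro k
    rw [← Real.exp_nat_mul, ← Real.exp_add]
    congr 1
    ring
  have hsum : Summable (fun k : ℕ => Real.exp (-a * n) * (Real.exp (-a)) ^ k) :=
    (summable_geometric_of_lt_one hr0 hr1).mul_left _
  calc ∑' k : ℕ, ENNReal.ofReal (Real.exp (-a * ((n : ℝ) + k)))
      = ∑' k : ℕ, ENNReal.ofReal (Real.exp (-a * n) * (Real.exp (-a)) ^ k) :=
        tsum_congr (fun k => by rw [hpt k])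
    _ = ENNReal.ofReal (∑' k : ℕ, Real.exp (-a * n) * (Real.exp (-a)) ^ k) :=
        (ENNReal.ofReal_tsum_of_nonneg (fun k => by positivity) hsum).symm
    _ = ENNReal.ofReal (Real.exp (-a * n) / (1 - Real.exp (-a))) := by
        rw [tsum_mul_left, tsum_geometric_of_lt_one hr0 hr1, div_eq_mul_inv]

lemma le_of_forall_lt_bound {μ : ℝ≥0∞} {α : ℝ} (hα : 0 < α) (n : ℕ)
    (hb : ∀ a : ℝ, 0 < a → a < α →
      μ ≤ ENNReal.ofReal (Real.exp (-a * n) / (1 - Real.exp (-a)))) :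
    μ ≤ ENNReal.ofReal (Real.exp (-α * n) / (1 - Real.exp (-α))) := by
  have hseq : Filter.Tendsto (fun j : ℕ => α - α / ((j : ℝ) + 2)) Filter.atTop (nhds α) := by
    have h1 : Filter.Tendsto (fun j : ℕ => α / ((j : ℝ) + 2)) Filter.atTop (nhds 0) := by
      have h2 := (tendsto_const_div_atTop_nhds_zero_nat α).comp (Filter.tendsto_add_atTop_nat 2)
      have h3 : ∀ j : ℕ, ((fun n : ℕ => α / (n : ℝ)) ∘ (fun j => j + 2)) j = α / ((j : ℝ) + 2) := by
        intro j
        simp only [Function.comp_apply]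
        norm_cast
      exact Filter.Tendsto.congr h3 h2
    simpa using tendsto_const_nhds.sub h1
  have hcont : ContinuousAt (fun a : ℝ =>
      ENNReal.ofReal (Real.exp (-a * n) / (1 - Real.exp (-a)))) α := by
    apply ENNReal.continuous_ofReal.continuousAt.comp
    apply ContinuousAt.div
    · exact (Real.continuous_exp.comp (by continuity)).continuousAt
    · exact (continuous_const.sub (Real.continuous_exp.comp (by continuity))).continuousAt
    · have : Real.exp (-α) < 1 := Real.exp_lt_one_iff.mpr (by linarith)
      intro hzero
      rw [sub_eq_zero] at hzero
      linarith
  have hFt : Filter.Tendsto (fun j : ℕ =>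
      ENNReal.ofReal (Real.exp (-(α - α / ((j : ℝ) + 2)) * n) /
        (1 - Real.exp (-(α - α / ((j : ℝ) + 2)))))) Filter.atTop
      (nhds (ENNReal.ofReal (Real.exp (-α * n) / (1 - Real.exp (-α))))) :=
    (hcont.tendsto).comp hseq
  apply ge_of_tendsto' hFt
  intro j
  have hj2 : (0:ℝ) < (j : ℝ) + 2 := by positivity
  have hd1 : α / ((j : ℝ) + 2) ≤ α / 2 :=
    div_le_div_of_nonneg_left hα.le (by norm_num) (by push_cast; linarith)
  have hd0 : 0 < α / ((j : ℝ) + 2) := by positivity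
  exact hb _ (by linarith) (by linarith)

theorem stmt12 (ε τ₁ τ₂ A : ℝ) (hε : 0 < ε) (hτ₁ : 0 < τ₁) (hττ : τ₁ < τ₂)
    (hA1 : 1 + τ₁ < A) (hA2 : A < 1 + τ₂) :
    0 < fSup A τ₁ ∧ 0 < gSup A τ₂ ∧
    ∀ θ' θ'' : ℕ → ℝ, Summable (fun i => θ' i ^ 2) → Summable (fun i => θ'' i ^ 2) →
    ∀ n₁ n₂ : ℕ, 1 ≤ n₁ → 1 ≤ n₂ →
    ∀ P' P'' : Measure (ℕ → ℝ),
      IsGaussianProduct ε θ' P' → IsGaussianProduct ε θ'' P'' →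
    P' {x | ∃ d : ℕ, effDim ε τ₁ θ' + n₁ ≤ d ∧
          critF ε A x d ≤ critF ε A x (effDim ε τ₁ θ')} +
      P'' {x | ∃ d : ℕ, 1 ≤ d ∧ d + n₂ ≤ effDim ε τ₂ θ'' ∧
          critF ε A x d ≤ critF ε A x (effDim ε τ₂ θ'')} ≤
      ENNReal.ofReal (Real.exp (-(fSup A τ₁) * n₁) / (1 - Real.exp (-(fSup A τ₁))) +
        Real.exp (-(gSup A τ₂) * n₂) / (1 - Real.exp (-(gSup A τ₂)))) := by
  have hτ₂ : 0 < τ₂ := lt_trans hτ₁ hττ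
  have hA0 : 0 < A := by linarith
  have hα := fSup_pos hτ₁ hA1
  have hβ := gSup_pos hτ₂ hA0 hA2
  refine ⟨hα, hβ, ?_⟩
  intro θ' θ'' hθ' hθ'' n₁ n₂ hn₁ hn₂ P' P'' hP' hP''
  obtain ⟨hd1ge, hopt1⟩ := effDim_spec ε τ₁ hε hτ₁ θ' hθ'
  obtain ⟨hd2ge, hopt2⟩ := effDim_spec ε τ₂ hε hτ₂ θ'' hθ''
  set d1 := effDim ε τ₁ θ' with hd1def
  set d2 := effDim ε τ₂ θ'' with hd2def
  have key1 : P' {x | ∃ d : ℕ, d1 + n₁ ≤ d ∧ critF ε A x d ≤ critF ε A x d1} ≤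
      ENNReal.ofReal (Real.exp (-(fSup A τ₁) * n₁) / (1 - Real.exp (-(fSup A τ₁)))) := by
    apply le_of_forall_lt_bound hα n₁
    intro a ha0 haα
    have hne1 : ((fun h => fFun h A τ₁) '' Set.Ico 0 1).Nonempty :=
      ⟨fFun 0 A τ₁, ⟨0, ⟨le_rfl, one_pos⟩, rfl⟩⟩
    obtain ⟨y, ⟨h, ⟨hh0, hh1⟩, rfl⟩, hay⟩ := exists_lt_of_lt_csSup hne1 haα
    replace hay : a < fFun h A τ₁ := hay
    have hfh0 : fFun 0 A τ₁ = 0 := by simp [fFun]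
    have hhpos : 0 < h := by
      rcases lt_or_eq_of_le hh0 with hlt | heq
      · exact hlt
      · exfalso
        rw [← heq, hfh0] at hay
        linarith
    have hper : ∀ m : ℕ, P' {x | critF ε A x (d1 + (n₁ + m)) ≤ critF ε A x d1} ≤
        ENNReal.ofReal (Real.exp (-a * ((n₁ : ℝ) + m))) := by
      intro m
      have htail : ∑ j ∈ Finset.Ioc d1 (d1 + (n₁ + m)), θ' j ^ 2 ≤
          τ₁ * ((n₁ + m : ℕ) : ℝ) * ε ^ 2 := by
        have hopt := hopt1 (d1 + (n₁ + m)) (by omega)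
        have hdiff := tailSum_diff θ' hθ' (Nat.le_add_right d1 (n₁ + m))
        simp only [rErr] at hopt
        push_cast at hopt ⊢
        linarith
      calc P' {x | critF ε A x (d1 + (n₁ + m)) ≤ critF ε A x d1}
          ≤ ENNReal.ofReal (Real.exp (-((n₁ + m : ℕ) : ℝ) * fFun h A τ₁)) :=
            overshoot ε τ₁ A hε θ' P' hP' d1 (n₁ + m) htail h hhpos hh1
        _ ≤ ENNReal.ofReal (Real.exp (-a * ((n₁ : ℝ) + m))) := by
            apply ENNReal.ofReal_le_ofReal
            apply Real.exp_le_exp.mpr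
            have h1 : ((n₁ + m : ℕ) : ℝ) = (n₁ : ℝ) + m := by push_cast; ring
            rw [h1]
            have h2 : (0:ℝ) ≤ (n₁ : ℝ) + m := by positivity
            nlinarith
    have hsub : {x : ℕ → ℝ | ∃ d : ℕ, d1 + n₁ ≤ d ∧ critF ε A x d ≤ critF ε A x d1} ⊆
        ⋃ m : ℕ, {x | critF ε A x (d1 + (n₁ + m)) ≤ critF ε A x d1} := by
      rintro x ⟨d, hdge, hcrit⟩
      refine Set.mem_iUnion.mpr ⟨d - d1 - n₁, ?_⟩
      have heq : d1 + (n₁ + (d - d1 - n₁)) = d := by omega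
      simp only [Set.mem_setOf_eq, heq]
      exact hcrit
    calc P' {x | ∃ d : ℕ, d1 + n₁ ≤ d ∧ critF ε A x d ≤ critF ε A x d1}
        ≤ P' (⋃ m : ℕ, {x | critF ε A x (d1 + (n₁ + m)) ≤ critF ε A x d1}) :=
          measure_mono hsub
      _ ≤ ∑' m : ℕ, P' {x | critF ε A x (d1 + (n₁ + m)) ≤ critF ε A x d1} :=
          measure_iUnion_le _
      _ ≤ ∑' m : ℕ, ENNReal.ofReal (Real.exp (-a * ((n₁ : ℝ) + m))) :=
          ENNReal.tsum_le_tsum hper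
      _ = _ := geom_bound a ha0 n₁
  have key2 : P'' {x | ∃ d : ℕ, 1 ≤ d ∧ d + n₂ ≤ d2 ∧ critF ε A x d ≤ critF ε A x d2} ≤
      ENNReal.ofReal (Real.exp (-(gSup A τ₂) * n₂) / (1 - Real.exp (-(gSup A τ₂)))) := by
    apply le_of_forall_lt_bound hβ n₂
    intro b hb0 hbβ
    have hne2 : ((fun h => gFun h A τ₂) '' Set.Icc 0 1).Nonempty :=
      ⟨gFun 0 A τ₂, ⟨0, ⟨le_rfl, zero_le_one⟩, rfl⟩⟩
    obtain ⟨y, ⟨h, ⟨hh0, hh1⟩, rfl⟩, hby⟩ := exists_lt_of_lt_csSup hne2 hbβ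
    replace hby : b < gFun h A τ₂ := hby
    have hg0 : gFun 0 A τ₂ = 0 := by simp [gFun, fFun]
    have hhpos : 0 < h := by
      rcases lt_or_eq_of_le hh0 with hlt | heq
      · exact hlt
      · exfalso
        rw [← heq, hg0] at hby
        linarith
    have hper : ∀ m : ℕ,
        P'' {x | ∃ d : ℕ, 1 ≤ d ∧ d + (n₂ + m) = d2 ∧ critF ε A x d ≤ critF ε A x d2} ≤
        ENNReal.ofReal (Real.exp (-b * ((n₂ : ℝ) + m))) := by
      intro m
      by_cases hex : ∃ d : ℕ, 1 ≤ d ∧ d + (n₂ + m) = d2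
      · obtain ⟨d, hdge, hdeq⟩ := hex
        have hsub2 : {x : ℕ → ℝ | ∃ d' : ℕ, 1 ≤ d' ∧ d' + (n₂ + m) = d2 ∧
            critF ε A x d' ≤ critF ε A x d2} ⊆
            {x | critF ε A x d ≤ critF ε A x (d + (n₂ + m))} := by
          rintro x ⟨d', hd'1, hd'eq, hcrit⟩
          have hdd : d' = d := by omega
          subst hdd
          simp only [Set.mem_setOf_eq, hd'eq]
          exact hcrit
        have hcast2 : ((d : ℕ) : ℝ) + ((n₂ + m : ℕ) : ℝ) = (d2 : ℝ) := by
          exact_mod_cast congrArg (Nat.cast : ℕ → ℝ) hdeq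
        have htail2 : τ₂ * ((n₂ + m : ℕ) : ℝ) * ε ^ 2 ≤
            ∑ j ∈ Finset.Ioc d (d + (n₂ + m)), θ'' j ^ 2 := by
          have hopt := hopt2 d hdge
          have hdiff := tailSum_diff θ'' hθ'' (Nat.le_add_right d (n₂ + m))
          rw [hdeq] at hdiff
          rw [hdeq]
          simp only [rErr] at hopt
          have h4 : ((n₂ + m : ℕ) : ℝ) = (d2 : ℝ) - (d : ℝ) := by linarith [hcast2]
          have h5 : τ₂ * ((n₂ + m : ℕ) : ℝ) * ε ^ 2 =
              τ₂ * (d2 : ℝ) * ε ^ 2 - τ₂ * (d : ℝ) * ε ^ 2 := by rw [h4]; ring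
          rw [h5]
          linarith [hopt, hdiff]
        calc P'' {x | ∃ d' : ℕ, 1 ≤ d' ∧ d' + (n₂ + m) = d2 ∧
              critF ε A x d' ≤ critF ε A x d2}
            ≤ P'' {x | critF ε A x d ≤ critF ε A x (d + (n₂ + m))} := measure_mono hsub2
          _ ≤ ENNReal.ofReal (Real.exp (-((n₂ + m : ℕ) : ℝ) * gFun h A τ₂)) :=
              undershoot ε τ₂ A hε θ'' P'' hP'' d (n₂ + m) htail2 h hhpos hh1
          _ ≤ ENNReal.ofReal (Real.exp (-b * ((n₂ : ℝ) + m))) := by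
              apply ENNReal.ofReal_le_ofReal
              apply Real.exp_le_exp.mpr
              have h1 : ((n₂ + m : ℕ) : ℝ) = (n₂ : ℝ) + m := by push_cast; ring
              rw [h1]
              have h2 : (0:ℝ) ≤ (n₂ : ℝ) + m := by positivity
              nlinarith
      · have hempty : {x : ℕ → ℝ | ∃ d' : ℕ, 1 ≤ d' ∧ d' + (n₂ + m) = d2 ∧
            critF ε A x d' ≤ critF ε A x d2} = ∅ := by
          ext x
          simp only [Set.mem_setOf_eq, Set.mem_empty_iff_false, iff_false, not_exists]
          intro d' hcon
          exact hex ⟨d', hcon.1, hcon.2.1⟩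
        rw [hempty]
        simp
    have hsub : {x : ℕ → ℝ | ∃ d : ℕ, 1 ≤ d ∧ d + n₂ ≤ d2 ∧
        critF ε A x d ≤ critF ε A x d2} ⊆
        ⋃ m : ℕ, {x | ∃ d : ℕ, 1 ≤ d ∧ d + (n₂ + m) = d2 ∧
          critF ε A x d ≤ critF ε A x d2} := by
      rintro x ⟨d, h1, h2, h3⟩
      exact Set.mem_iUnion.mpr ⟨d2 - d - n₂, ⟨d, h1, by omega, h3⟩⟩
    calc P'' {x | ∃ d : ℕ, 1 ≤ d ∧ d + n₂ ≤ d2 ∧ critF ε A x d ≤ critF ε A x d2}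
        ≤ P'' (⋃ m : ℕ, {x | ∃ d : ℕ, 1 ≤ d ∧ d + (n₂ + m) = d2 ∧
            critF ε A x d ≤ critF ε A x d2}) := measure_mono hsub
      _ ≤ ∑' m : ℕ, P'' {x | ∃ d : ℕ, 1 ≤ d ∧ d + (n₂ + m) = d2 ∧
            critF ε A x d ≤ critF ε A x d2} := measure_iUnion_le _
      _ ≤ ∑' m : ℕ, ENNReal.ofReal (Real.exp (-b * ((n₂ : ℝ) + m))) :=
          ENNReal.tsum_le_tsum hper
      _ = _ := geom_bound b hb0 n₂
  have hden1 : 0 < 1 - Real.exp (-(fSup A τ₁)) := by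
    have := Real.exp_lt_one_iff.mpr (neg_lt_zero.mpr hα)
    linarith
  have hden2 : 0 < 1 - Real.exp (-(gSup A τ₂)) := by
    have := Real.exp_lt_one_iff.mpr (neg_lt_zero.mpr hβ)
    linarith
  calc P' {x | ∃ d : ℕ, d1 + n₁ ≤ d ∧ critF ε A x d ≤ critF ε A x d1} +
      P'' {x | ∃ d : ℕ, 1 ≤ d ∧ d + n₂ ≤ d2 ∧ critF ε A x d ≤ critF ε A x d2}
      ≤ ENNReal.ofReal (Real.exp (-(fSup A τ₁) * n₁) / (1 - Real.exp (-(fSup A τ₁)))) +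
        ENNReal.ofReal (Real.exp (-(gSup A τ₂) * n₂) / (1 - Real.exp (-(gSup A τ₂)))) :=
        add_le_add key1 key2
    _ = _ := by
        rw [← ENNReal.ofReal_add (by positivity) (by positivity)]
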